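/- Every absolutely separable two-qubit state belongs to ACVENN: if UσU† is separable for every 4×4 unitary U, then S(UσU†) − S((UσU†)_A) ≥ 0 for every 4×4 unitary U. -/

import Mathlib

open Matrix Finset
open scoped Kronecker ComplexOrder Classical

noncomputable section

/-- A quantum state: positive semidefinite matrix of trace 1. -/
def IsState {n : ℕ} (ρ : Matrix (Fin n) (Fin n) ℂ) : Prop :=
  ρ.PosSemidef ∧ ρ.trace = 1

/-- Von Neumann entropy `S(ρ) = -∑ᵢ λᵢ log₂ λᵢ` over the eigenvalues of `ρ`
(with the convention `0 · log₂ 0 = 0`, which holds since `Real.logb 2 0 = 0`). -/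
noncomputable def vnEntropy {n : ℕ} (ρ : Matrix (Fin n) (Fin n) ℂ) : ℝ :=
  if h : ρ.IsHermitian then -∑ i, h.eigenvalues i * Real.logb 2 (h.eigenvalues i) else 0

/-- Reduced state `ρ_A`: partial trace over the second tensor factor,
using the ordered product basis `|00⟩,|01⟩,|10⟩,|11⟩`, i.e. `|ab⟩ ↦ 2a+b`. -/
def ptraceB (ρ : Matrix (Fin 4) (Fin 4) ℂ) : Matrix (Fin 2) (Fin 2) ℂ :=
  Matrix.of fun i j => ∑ k : Fin 2,
    ρ ⟨2 * i.val + k.val, by omega⟩ ⟨2 * j.val + k.val, by omega⟩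

/-- Reduced state `ρ_B`: partial trace over the first tensor factor. -/
def ptraceA (ρ : Matrix (Fin 4) (Fin 4) ℂ) : Matrix (Fin 2) (Fin 2) ℂ :=
  Matrix.of fun i j => ∑ k : Fin 2,
    ρ ⟨2 * k.val + i.val, by omega⟩ ⟨2 * k.val + j.val, by omega⟩

/-- Conditional von Neumann entropy `S(A|B) = S(ρ_AB) - S(ρ_A)`. -/
def condEntropy (ρ : Matrix (Fin 4) (Fin 4) ℂ) : ℝ :=
  vnEntropy ρ - vnEntropy (ptraceB ρ)

/-- Rank-one projector `|v⟩⟨v|`. -/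
def proj (v : Fin 4 → ℂ) : Matrix (Fin 4) (Fin 4) ℂ := Matrix.vecMulVec v (star v)

/-- The Bell basis `|φ⁺⟩, |φ⁻⟩, |ψ⁺⟩, |ψ⁻⟩`. -/
noncomputable def bell : Fin 4 → Fin 4 → ℂ :=
  ![![(Real.sqrt 2 : ℂ)⁻¹, 0, 0, (Real.sqrt 2 : ℂ)⁻¹],
    ![(Real.sqrt 2 : ℂ)⁻¹, 0, 0, -(Real.sqrt 2 : ℂ)⁻¹],
    ![0, (Real.sqrt 2 : ℂ)⁻¹, (Real.sqrt 2 : ℂ)⁻¹, 0],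
    ![0, (Real.sqrt 2 : ℂ)⁻¹, -(Real.sqrt 2 : ℂ)⁻¹, 0]]

/-- Kronecker product of two one-qubit matrices as a `4 × 4` matrix,
with the index identification `(a,b) ↦ 2a+b`. -/
def kron (A B : Matrix (Fin 2) (Fin 2) ℂ) : Matrix (Fin 4) (Fin 4) ℂ :=
  Matrix.reindex finProdFinEquiv finProdFinEquiv (A ⊗ₖ B)

/-- A two-qubit state is separable if it is a convex combination of product states. -/
def Separable (σ : Matrix (Fin 4) (Fin 4) ℂ) : Prop :=
  ∃ (m : ℕ) (p : Fin m → ℝ) (α β : Fin m → Matrix (Fin 2) (Fin 2) ℂ),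
    (∀ i, 0 ≤ p i) ∧ (∑ i, p i = 1) ∧ (∀ i, IsState (α i)) ∧ (∀ i, IsState (β i)) ∧
    σ = ∑ i, (p i : ℂ) • kron (α i) (β i)

/-!
Fix a unitary `U`, put `ρ = UσU†`, and write `ρ = P diag(λ) P†`. The unitary `B P†`, with `B`
the Bell basis, turns `ρ` into a state that is separable (absolute separability) and whose
diagonal in the Bell basis is `λ`. For a product state, `⟨Φᵢ|α ⊗ β|Φᵢ⟩ = ½ tr(α γᵀ)` with `γ`
a local unitary conjugate of `β`, and `tr(α γᵀ) ≤ 1` for qubit states; by convexity every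
separable state has Bell fidelities at most `½`. Hence every `λᵢ ≤ ½`, so `S(ρ) ≥ 1`, while
`S(ρ_A) ≤ 1` for the qubit state `ρ_A`.
-/

namespace IsState

variable {n : ℕ} {ρ : Matrix (Fin n) (Fin n) ℂ}

lemma unitary_conj (hρ : IsState ρ) {U : Matrix (Fin n) (Fin n) ℂ}
    (hU : U ∈ unitaryGroup (Fin n) ℂ) : IsState (U * ρ * Uᴴ) :=
  ⟨hρ.1.mul_mul_conjTranspose_same U, by
    rw [trace_mul_cycle, ← star_eq_conjTranspose, mem_unitaryGroup_iff'.mp hU, one_mul, hρ.2]⟩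

lemma sum_eigenvalues (hρ : IsState ρ) : ∑ i, hρ.1.1.eigenvalues i = 1 := by
  simpa using congrArg Complex.re (hρ.1.1.trace_eq_sum_eigenvalues.symm.trans hρ.2)

end IsState

lemma le_neg_mul_logb_two {x : ℝ} (hx : 0 ≤ x) (hx2 : x ≤ 1 / 2) :
    x ≤ -(x * Real.logb 2 x) := by
  rcases hx.eq_or_lt with rfl | hpos
  · simp
  · have hlog : Real.logb 2 x ≤ -1 :=
      calc Real.logb 2 x ≤ Real.logb 2 2⁻¹ :=
            Real.logb_le_logb_of_le (by norm_num) hpos (by linarith)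
        _ = -1 := by rw [Real.logb_inv, Real.logb_self_eq_one (by norm_num)]
    nlinarith

lemma one_le_vnEntropy {n : ℕ} {ρ : Matrix (Fin n) (Fin n) ℂ} (hρ : IsState ρ)
    (hhalf : ∀ i, hρ.1.1.eigenvalues i ≤ 1 / 2) : 1 ≤ vnEntropy ρ := by
  rw [vnEntropy, dif_pos hρ.1.1, ← hρ.sum_eigenvalues, ← Finset.sum_neg_distrib]
  exact Finset.sum_le_sum fun i _ => le_neg_mul_logb_two (hρ.1.eigenvalues_nonneg i) (hhalf i)

lemma vnEntropy_le_one {ρ : Matrix (Fin 2) (Fin 2) ℂ} (hρ : IsState ρ) : vnEntropy ρ ≤ 1 := by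
  have hsum := hρ.sum_eigenvalues
  rw [Fin.sum_univ_two] at hsum
  rw [vnEntropy, dif_pos hρ.1.1, Fin.sum_univ_two, eq_sub_of_add_eq' hsum]
  set p := hρ.1.1.eigenvalues 0
  have hbin : -(p * Real.logb 2 p + (1 - p) * Real.logb 2 (1 - p)) =
      Real.binEntropy p / Real.log 2 := by
    simp only [Real.logb, Real.binEntropy, Real.log_inv]
    ring
  rw [hbin]
  exact div_le_one_of_le₀ Real.binEntropy_le_log_two (Real.log_nonneg one_le_two)

def ptraceBKraus (k : Fin 2) : Matrix (Fin 4) (Fin 2) ℂ :=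
  of fun r i => if r = ⟨2 * i.val + k.val, by omega⟩ then 1 else 0

lemma ptraceB_eq_sum (ρ : Matrix (Fin 4) (Fin 4) ℂ) :
    ptraceB ρ = ∑ k, (ptraceBKraus k)ᴴ * ρ * ptraceBKraus k := by
  ext i j
  simp [ptraceB, ptraceBKraus, mul_apply, Matrix.sum_apply]

lemma IsState.ptraceB {ρ : Matrix (Fin 4) (Fin 4) ℂ} (hρ : IsState ρ) : IsState (ptraceB ρ) := by
  refine ⟨?_, ?_⟩
  · rw [ptraceB_eq_sum]
    exact posSemidef_sum _ fun k _ => hρ.1.conjTranspose_mul_mul_same _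
  · rw [← hρ.2]
    simp [_root_.ptraceB, trace, Fin.sum_univ_two, Fin.sum_univ_four]
    ring

lemma two_mul_le_of_sq_le_mul {a₀ a₁ c₀ c₁ x y : ℝ} (ha₀ : 0 ≤ a₀) (ha₁ : 0 ≤ a₁)
    (hc₀ : 0 ≤ c₀) (hc₁ : 0 ≤ c₁) (hxa : x ^ 2 ≤ a₀ * a₁) (hyc : y ^ 2 ≤ c₀ * c₁) :
    2 * (x * y) ≤ a₀ * c₁ + a₁ * c₀ := by
  refine le_of_pow_le_pow_left₀ two_ne_zero (by positivity) ?_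
  calc (2 * (x * y)) ^ 2 = 4 * (x ^ 2 * y ^ 2) := by ring
    _ ≤ 4 * ((a₀ * a₁) * (c₀ * c₁)) := by gcongr
    _ ≤ (a₀ * c₁ + a₁ * c₀) ^ 2 := by nlinarith [sq_nonneg (a₀ * c₁ - a₁ * c₀)]

namespace Matrix.PosSemidef

lemma re_apply_self_nonneg {n : Type*} {A : Matrix n n ℂ} (hA : A.PosSemidef) (i : n) :
    0 ≤ (A i i).re :=
  (Complex.nonneg_iff.mp hA.diag_nonneg).1

lemma norm_apply_zero_one_sq_le {A : Matrix (Fin 2) (Fin 2) ℂ} (hA : A.PosSemidef) :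
    ‖A 0 1‖ ^ 2 ≤ (A 0 0).re * (A 1 1).re := by
  have hdet := hA.det_nonneg
  rw [det_fin_two, ← hA.1.apply 1 0, ← hA.1.coe_re_apply_self 0, ← hA.1.coe_re_apply_self 1,
    Complex.star_def, Complex.mul_conj, Complex.normSq_eq_norm_sq] at hdet
  simpa [← Complex.ofReal_pow] using (Complex.le_def.mp (sub_nonneg.mp hdet)).1

end Matrix.PosSemidef

lemma IsState.re_sum_mul_le_one {A C : Matrix (Fin 2) (Fin 2) ℂ} (hA : IsState A)
    (hC : IsState C) : (∑ a, ∑ c, A a c * C a c).re ≤ 1 := by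
  have htr (ρ : Matrix (Fin 2) (Fin 2) ℂ) (hρ : IsState ρ) : (ρ 0 0).re + (ρ 1 1).re = 1 := by
    simpa [trace_fin_two] using congrArg Complex.re hρ.2
  have hoff : (A 0 1 * C 0 1 + A 1 0 * C 1 0).re ≤ 2 * (‖A 0 1‖ * ‖C 0 1‖) := by
    rw [← hA.1.1.apply 1 0, ← hC.1.1.apply 1 0, ← star_mul', Complex.star_def,
      Complex.add_conj, ← norm_mul]
    simpa using Complex.re_le_norm (A 0 1 * C 0 1)
  have hcross := two_mul_le_of_sq_le_mul (hA.1.re_apply_self_nonneg 0)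
    (hA.1.re_apply_self_nonneg 1) (hC.1.re_apply_self_nonneg 0) (hC.1.re_apply_self_nonneg 1)
    hA.1.norm_apply_zero_one_sq_le hC.1.norm_apply_zero_one_sq_le
  have hdiag : (A 0 0 * C 0 0 + A 1 1 * C 1 1).re =
      (A 0 0).re * (C 0 0).re + (A 1 1).re * (C 1 1).re := by
    rw [← hA.1.1.coe_re_apply_self 0, ← hA.1.1.coe_re_apply_self 1,
      ← hC.1.1.coe_re_apply_self 0, ← hC.1.1.coe_re_apply_self 1]
    norm_cast
  have hsum : (∑ a, ∑ c, A a c * C a c).re =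
      (A 0 0 * C 0 0 + A 1 1 * C 1 1).re + (A 0 1 * C 0 1 + A 1 0 * C 1 0).re := by
    simp only [Fin.sum_univ_two, ← Complex.add_re]
    ring_nf
  nlinarith [htr A hA, htr C hC]

def bellUnitary : Matrix (Fin 4) (Fin 4) ℂ := (of bell)ᵀ

lemma inv_sqrt_two_mul_self : ((Real.sqrt 2 : ℂ))⁻¹ * ((Real.sqrt 2 : ℂ))⁻¹ = 2⁻¹ := by
  rw [← mul_inv, ← Complex.ofReal_mul, Real.mul_self_sqrt zero_le_two]
  norm_num

lemma bellUnitary_mem_unitaryGroup : bellUnitary ∈ unitaryGroup (Fin 4) ℂ := by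
  rw [mem_unitaryGroup_iff']
  ext i j
  fin_cases i <;> fin_cases j <;>
    simp [bellUnitary, bell, mul_apply, Fin.sum_univ_four, one_apply, inv_sqrt_two_mul_self] <;>
    norm_num

/-- `1 ⊗ pauliFrame i` maps the Bell vector `bell 0` to `bell i`. -/
def pauliFrame : Fin 4 → Matrix (Fin 2) (Fin 2) ℂ :=
  ![1, !![1, 0; 0, -1], !![0, 1; 1, 0], !![0, 1; -1, 0]]

lemma pauliFrame_mem_unitaryGroup (i : Fin 4) : pauliFrame i ∈ unitaryGroup (Fin 2) ℂ := by
  rw [mem_unitaryGroup_iff']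
  fin_cases i <;> ext a b <;> fin_cases a <;> fin_cases b <;>
    simp [pauliFrame, mul_apply, Fin.sum_univ_two]

lemma kron_eq (A B : Matrix (Fin 2) (Fin 2) ℂ) : kron A B =
    !![A 0 0 * B 0 0, A 0 0 * B 0 1, A 0 1 * B 0 0, A 0 1 * B 0 1;
       A 0 0 * B 1 0, A 0 0 * B 1 1, A 0 1 * B 1 0, A 0 1 * B 1 1;
       A 1 0 * B 0 0, A 1 0 * B 0 1, A 1 1 * B 0 0, A 1 1 * B 0 1;
       A 1 0 * B 1 0, A 1 0 * B 1 1, A 1 1 * B 1 0, A 1 1 * B 1 1] := by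
  ext i j
  fin_cases i <;> fin_cases j <;> rfl

lemma bellUnitary_conj_kron_apply_self (A B : Matrix (Fin 2) (Fin 2) ℂ) (i : Fin 4) :
    (bellUnitaryᴴ * kron A B * bellUnitary) i i =
      2⁻¹ * ∑ a, ∑ c, A a c * (pauliFrame i * B * (pauliFrame i)ᴴ) a c := by
  rw [kron_eq]
  fin_cases i <;>
    simp [bellUnitary, bell, pauliFrame, mul_apply, vecMul, dotProduct, Fin.sum_univ_four,
      Fin.sum_univ_two] <;>
    ring_nf <;> simp only [sq, inv_sqrt_two_mul_self] <;> ring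

lemma re_bellUnitary_conj_kron_apply_self_le {A B : Matrix (Fin 2) (Fin 2) ℂ} (hA : IsState A)
    (hB : IsState B) (i : Fin 4) :
    ((bellUnitaryᴴ * kron A B * bellUnitary) i i).re ≤ 1 / 2 := by
  have h := hA.re_sum_mul_le_one (hB.unitary_conj (pauliFrame_mem_unitaryGroup i))
  rw [bellUnitary_conj_kron_apply_self, ← Complex.ofReal_ofNat, ← Complex.ofReal_inv,
    Complex.re_ofReal_mul]
  linarith

lemma Separable.re_bellUnitary_conj_apply_self_le {τ : Matrix (Fin 4) (Fin 4) ℂ}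
    (hτ : Separable τ) (i : Fin 4) : ((bellUnitaryᴴ * τ * bellUnitary) i i).re ≤ 1 / 2 := by
  obtain ⟨m, p, α, β, hp, hp1, hα, hβ, rfl⟩ := hτ
  simp only [Matrix.mul_sum, Matrix.sum_mul, Matrix.mul_smul, Matrix.smul_mul, Matrix.sum_apply,
    Matrix.smul_apply, smul_eq_mul, Complex.re_sum, Complex.re_ofReal_mul]
  calc ∑ j, p j * ((bellUnitaryᴴ * kron (α j) (β j) * bellUnitary) i i).re
      ≤ ∑ j, p j * (1 / 2) := Finset.sum_le_sum fun j _ =>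
        mul_le_mul_of_nonneg_left (re_bellUnitary_conj_kron_apply_self_le (hα j) (hβ j) i) (hp j)
    _ = 1 / 2 := by rw [← Finset.sum_mul, hp1, one_mul]

lemma Matrix.IsHermitian.eigenvalues_le_half_of_forall_separable {ρ : Matrix (Fin 4) (Fin 4) ℂ}
    (hρ : ρ.IsHermitian) (habs : ∀ V ∈ unitaryGroup (Fin 4) ℂ, Separable (V * ρ * Vᴴ))
    (i : Fin 4) : hρ.eigenvalues i ≤ 1 / 2 := by
  set P : Matrix (Fin 4) (Fin 4) ℂ := (hρ.eigenvectorUnitary : Matrix (Fin 4) (Fin 4) ℂ)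
  have hdiag : star P * ρ * P = diagonal (RCLike.ofReal ∘ hρ.eigenvalues) := by
    simpa using hρ.conjStarAlgAut_star_eigenvectorUnitary
  set V := bellUnitary * star P
  have hV : V ∈ unitaryGroup (Fin 4) ℂ :=
    mul_mem bellUnitary_mem_unitaryGroup (Unitary.star_mem hρ.eigenvectorUnitary.2)
  have hB : bellUnitaryᴴ * bellUnitary = 1 :=
    mem_unitaryGroup_iff'.mp bellUnitary_mem_unitaryGroup
  have hconj : bellUnitaryᴴ * (V * ρ * Vᴴ) * bellUnitary = star P * ρ * P :=
    calc _ = bellUnitaryᴴ * bellUnitary * (star P * ρ * P) * (bellUnitaryᴴ * bellUnitary) := by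
          simp only [V, ← star_eq_conjTranspose, star_mul, star_star, Matrix.mul_assoc]
      _ = _ := by rw [hB, one_mul, mul_one]
  have h := (habs V hV).re_bellUnitary_conj_apply_self_le i
  rw [hconj, hdiag, diagonal_apply_eq] at h
  simpa using h

/-- Every absolutely separable two-qubit state belongs to ACVENN. -/
theorem stmt_6 (σ : Matrix (Fin 4) (Fin 4) ℂ) (hσ : IsState σ)
    (habs : ∀ U ∈ Matrix.unitaryGroup (Fin 4) ℂ, Separable (U * σ * Uᴴ)) :
    ∀ U ∈ Matrix.unitaryGroup (Fin 4) ℂ, 0 ≤ condEntropy (U * σ * Uᴴ) := by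
  intro U hU
  have hρ := hσ.unitary_conj hU
  have habsρ : ∀ V ∈ unitaryGroup (Fin 4) ℂ, Separable (V * (U * σ * Uᴴ) * Vᴴ) := fun V hV => by
    simpa [conjTranspose_mul, Matrix.mul_assoc] using habs (V * U) (mul_mem hV hU)
  have hS := one_le_vnEntropy hρ (hρ.1.1.eigenvalues_le_half_of_forall_separable habsρ)
  have hSA := vnEntropy_le_one hρ.ptraceB
  rw [condEntropy]
  linarith
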